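/- arXiv:math/0109185 — 2 statements merged into one kernel-verified Lean document; each statement's English description precedes it below -/
import Mathlib

section
/- For the Laguerre polynomials Lₙ^α(x), with z = √(x − (α+1)/2) ≠ 0 and ξ = (x−α−1)/(2z), one has the finite expansion Lₙ^α(x) = (−1)ⁿ zⁿ Σ_{k=0}^n (cₖ/zᵏ) H_{n−k}(ξ)/(n−k)!, where cₖ are the Maclaurin coefficients in w of e^{−Aw+Bw²}(1+w)^{−α−1}e^{wx/(1+w)} with A = x−α−1 and B = x−(α+1)/2; moreover c₀ = 1, c₁ = c₂ = 0 and c₃ = (3x−α−1)/3. -/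
/-!
With `A = x - α - 1`, `B = x - (α + 1)/2` and `G` the Laguerre generating function, the Hermite
generating function at `(ξ, z w)` is `e^{A w - B w²}`, since `2 ξ z = A` and `z² = B`. Hence the
Cauchy product of the series `∑ cₖ wᵏ = e^{-A w + B w²} G(w)` with it is `G(w)`, and comparing
coefficients with `∑ (-1)ⁿ Lₙ wⁿ` gives the expansion. The values `c₀, …, c₃` are Taylor coefficients
of `F = e^{-A w + B w²} G`, whose logarithmic derivative `s` satisfies `s(0) = s'(0) = 0` and
`s''(0) = 6x - 2(α + 1)`.
-/

open Filter Topology Set FormalMultilinearSeries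

section PowerSeriesAtZero

variable {𝕜 : Type*} [NontriviallyNormedField 𝕜] {a b : ℕ → 𝕜} {f g : 𝕜 → 𝕜}

theorem hasFPowerSeriesAt_ofScalars_of_eventually_hasSum
    (h : ∀ᶠ w in 𝓝 0, HasSum (fun k => a k * w ^ k) (f w)) :
    HasFPowerSeriesAt f (ofScalars 𝕜 a) 0 := by
  obtain ⟨r, hr, hball⟩ := Metric.eventually_nhds_iff_ball.mp h
  obtain ⟨w₀, hw₀, hw₀r⟩ := NormedField.exists_norm_lt 𝕜 hr
  have hsub : ∀ {y : 𝕜}, ‖y‖ ≤ ‖w₀‖ → y ∈ Metric.ball 0 r := fun hy => by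
    rw [mem_ball_zero_iff]; linarith
  refine ⟨‖w₀‖₊, ?_, by simpa using hw₀, fun {y} hy => ?_⟩
  · refine (ofScalars 𝕜 a).le_radius_of_tendsto (l := 0) ?_
    simpa [ofScalars_norm, norm_pow] using (hball w₀ (hsub le_rfl)).summable.tendsto_atTop_zero.norm
  · rw [Metric.mem_eball, edist_zero_right, enorm_eq_nnnorm, ENNReal.coe_lt_coe,
      ← NNReal.coe_lt_coe, coe_nnnorm, coe_nnnorm] at hy
    simpa only [zero_add, ofScalars_apply_eq, smul_eq_mul] using hball y (hsub hy.le)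

theorem coeff_eq_of_eventually_hasSum
    (ha : ∀ᶠ w in 𝓝 0, HasSum (fun k => a k * w ^ k) (f w))
    (hb : ∀ᶠ w in 𝓝 0, HasSum (fun k => b k * w ^ k) (f w)) : a = b :=
  ofScalars_series_injective 𝕜 𝕜 <|
    (hasFPowerSeriesAt_ofScalars_of_eventually_hasSum ha).eq_formalMultilinearSeries
      (hasFPowerSeriesAt_ofScalars_of_eventually_hasSum hb)

theorem factorial_mul_coeff_eq_iteratedDeriv_of_eventually_hasSum [CompleteSpace 𝕜]
    (h : ∀ᶠ w in 𝓝 0, HasSum (fun k => a k * w ^ k) (f w)) (n : ℕ) :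
    (n.factorial : 𝕜) * a n = iteratedDeriv n f 0 := by
  obtain ⟨r, hf⟩ := hasFPowerSeriesAt_ofScalars_of_eventually_hasSum h
  simpa [ofScalars_apply_eq, nsmul_eq_mul, ← iteratedDeriv_eq_iteratedFDeriv] using
    hf.factorial_smul 1 n

theorem eventually_summable_norm_of_eventually_hasSum
    (h : ∀ᶠ w in 𝓝 0, HasSum (fun k => a k * w ^ k) (f w)) :
    ∀ᶠ w in 𝓝 0, Summable fun k => ‖a k * w ^ k‖ := by
  obtain ⟨r, hf⟩ := hasFPowerSeriesAt_ofScalars_of_eventually_hasSum h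
  filter_upwards [Metric.eball_mem_nhds (0 : 𝕜) hf.r_pos] with w hw
  simpa [ofScalars_apply_eq, mul_comm] using
    (ofScalars 𝕜 a).summable_norm_apply (Metric.eball_subset_eball hf.r_le hw)

theorem eventually_hasSum_cauchyProduct [CompleteSpace 𝕜]
    (ha : ∀ᶠ w in 𝓝 0, HasSum (fun k => a k * w ^ k) (f w))
    (hb : ∀ᶠ w in 𝓝 0, HasSum (fun k => b k * w ^ k) (g w)) :
    ∀ᶠ w in 𝓝 0, HasSum
      (fun n => (∑ k ∈ Finset.range (n + 1), a k * b (n - k)) * w ^ n) (f w * g w) := by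
  filter_upwards [ha, hb, eventually_summable_norm_of_eventually_hasSum ha,
    eventually_summable_norm_of_eventually_hasSum hb] with w ha hb hna hnb
  convert hasSum_sum_range_mul_of_summable_norm hna hnb using 1
  · ext n
    rw [Finset.sum_mul]
    refine Finset.sum_congr rfl fun k hk => ?_
    rw [← pow_mul_pow_sub w (Nat.le_of_lt_succ (Finset.mem_range.mp hk))]
    ring
  · rw [ha.tsum_eq, hb.tsum_eq]

end PowerSeriesAtZero

theorem Set.EqOn.iteratedDeriv_succ {𝕜 : Type*} [NontriviallyNormedField 𝕜] {n : ℕ}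
    {f g g' : 𝕜 → 𝕜} {U : Set 𝕜} (hU : IsOpen U) (h : EqOn (iteratedDeriv n f) g U)
    (hg : ∀ w ∈ U, HasDerivAt g (g' w) w) : EqOn (iteratedDeriv (n + 1) f) g' U := by
  intro w hw
  rw [_root_.iteratedDeriv_succ]
  exact ((hg w hw).congr_of_eventuallyEq (h.eventuallyEq_of_mem (hU.mem_nhds hw))).deriv

theorem eqOn_iteratedDeriv_of_hasDerivAt_mul {𝕜 : Type*} [NontriviallyNormedField 𝕜]
    {f s s₁ s₂ : 𝕜 → 𝕜} {U : Set 𝕜} (hU : IsOpen U)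
    (hf : ∀ w ∈ U, HasDerivAt f (f w * s w) w) (hs : ∀ w ∈ U, HasDerivAt s (s₁ w) w)
    (hs₁ : ∀ w ∈ U, HasDerivAt s₁ (s₂ w) w) :
    EqOn (iteratedDeriv 1 f) (fun w => f w * s w) U ∧
    EqOn (iteratedDeriv 2 f) (fun w => f w * (s w ^ 2 + s₁ w)) U ∧
    EqOn (iteratedDeriv 3 f) (fun w => f w * (s w ^ 3 + 3 * s w * s₁ w + s₂ w)) U := by
  have h₁ : EqOn (iteratedDeriv 1 f) (fun w => f w * s w) U :=
    (iteratedDeriv_zero (f := f) ▸ eqOn_refl f U).iteratedDeriv_succ hU hf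
  have h₂ : EqOn (iteratedDeriv 2 f) (fun w => f w * (s w ^ 2 + s₁ w)) U :=
    h₁.iteratedDeriv_succ hU fun w hw => ((hf w hw).mul (hs w hw)).congr_deriv (by ring)
  refine ⟨h₁, h₂, h₂.iteratedDeriv_succ hU fun w hw => ?_⟩
  refine ((hf w hw).mul (((hs w hw).pow 2).add (hs₁ w hw))).congr_deriv ?_
  simp only [Pi.add_apply, Pi.pow_apply]
  push_cast
  ring

noncomputable def laguerreGen (α x w : ℂ) : ℂ :=
  (1 + w) ^ (-α - 1) * Complex.exp (w * x / (1 + w))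

noncomputable def hermiteCoeffGen (α x w : ℂ) : ℂ :=
  Complex.exp (-(x - α - 1) * w + (x - (α + 1) / 2) * w ^ 2) * laguerreGen α x w

section HermiteCoeffGen

variable (α x : ℂ) {w : ℂ}

theorem hasDerivAt_hermiteCoeffGen (hw : 1 + w ∈ Complex.slitPlane) :
    HasDerivAt (hermiteCoeffGen α x) (hermiteCoeffGen α x w *
      (-(x - α - 1) + 2 * (x - (α + 1) / 2) * w - (α + 1) / (1 + w) + x / (1 + w) ^ 2)) w := by
  have hne : 1 + w ≠ 0 := Complex.slitPlane_ne_zero hw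
  have h1w : HasDerivAt (fun w : ℂ => 1 + w) 1 w := (hasDerivAt_id w).const_add 1
  have hpoly : HasDerivAt (fun w : ℂ => -(x - α - 1) * w + (x - (α + 1) / 2) * w ^ 2)
      (-(x - α - 1) * 1 + (x - (α + 1) / 2) * (↑2 * w ^ (2 - 1) * 1)) w :=
    ((hasDerivAt_id w).const_mul _).add (((hasDerivAt_id w).pow 2).const_mul _)
  refine (hpoly.cexp.mul ((h1w.cpow_const hw).mul
    (((hasDerivAt_id w).mul_const x).div h1w hne).cexp)).congr_deriv ?_
  rw [Complex.cpow_sub _ _ hne, Complex.cpow_one]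
  simp only [hermiteCoeffGen, laguerreGen, Pi.mul_apply, Pi.div_apply, _root_.id]
  field_simp
  ring

theorem hasDerivAt_hermiteCoeffGen_logDeriv (hw : 1 + w ∈ Complex.slitPlane) :
    HasDerivAt
      (fun w => -(x - α - 1) + 2 * (x - (α + 1) / 2) * w - (α + 1) / (1 + w) + x / (1 + w) ^ 2)
      (2 * (x - (α + 1) / 2) + (α + 1) / (1 + w) ^ 2 - 2 * x / (1 + w) ^ 3) w := by
  have hne : 1 + w ≠ 0 := Complex.slitPlane_ne_zero hw
  have h1w : HasDerivAt (fun w : ℂ => 1 + w) 1 w := (hasDerivAt_id w).const_add 1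
  refine ((((hasDerivAt_id w).const_mul _).const_add _).sub
    ((hasDerivAt_const w _).div h1w hne)).add
    ((hasDerivAt_const w x).div (h1w.pow 2) (pow_ne_zero _ hne)) |>.congr_deriv ?_
  simp only [Pi.pow_apply]
  field_simp
  ring

theorem hasDerivAt_hermiteCoeffGen_logDeriv_deriv (hw : 1 + w ∈ Complex.slitPlane) :
    HasDerivAt (fun w => 2 * (x - (α + 1) / 2) + (α + 1) / (1 + w) ^ 2 - 2 * x / (1 + w) ^ 3)
      (-2 * (α + 1) / (1 + w) ^ 3 + 6 * x / (1 + w) ^ 4) w := by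
  have hne : 1 + w ≠ 0 := Complex.slitPlane_ne_zero hw
  have h1w : HasDerivAt (fun w : ℂ => 1 + w) 1 w := (hasDerivAt_id w).const_add 1
  refine (((hasDerivAt_const w _).div (h1w.pow 2) (pow_ne_zero _ hne)).const_add _).sub
    ((hasDerivAt_const w _).div (h1w.pow 3) (pow_ne_zero _ hne)) |>.congr_deriv ?_
  simp only [Pi.pow_apply]
  field_simp
  ring

theorem coeff_of_hasSum_hermiteCoeffGen {c : ℕ → ℂ}
    (hc : ∀ᶠ w in 𝓝 0, HasSum (fun k => c k * w ^ k) (hermiteCoeffGen α x w)) :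
    c 0 = 1 ∧ c 1 = 0 ∧ c 2 = 0 ∧ c 3 = (3 * x - α - 1) / 3 := by
  let U : Set ℂ := (1 + ·) ⁻¹' Complex.slitPlane
  have hU : IsOpen U := Complex.isOpen_slitPlane.preimage (continuous_const_add 1)
  have h0 : (0 : ℂ) ∈ U := by simp [U, Complex.one_mem_slitPlane]
  obtain ⟨d₁, d₂, d₃⟩ := eqOn_iteratedDeriv_of_hasDerivAt_mul hU
    (fun w hw => hasDerivAt_hermiteCoeffGen α x hw)
    (fun w hw => hasDerivAt_hermiteCoeffGen_logDeriv α x hw)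
    (fun w hw => hasDerivAt_hermiteCoeffGen_logDeriv_deriv α x hw)
  have hF0 : hermiteCoeffGen α x 0 = 1 := by simp [hermiteCoeffGen, laguerreGen]
  have hk := factorial_mul_coeff_eq_iteratedDeriv_of_eventually_hasSum hc
  have e₀ := hk 0
  have e₁ := hk 1
  have e₂ := hk 2
  have e₃ := hk 3
  rw [iteratedDeriv_zero] at e₀
  rw [d₁ h0] at e₁
  rw [d₂ h0] at e₂
  rw [d₃ h0] at e₃
  norm_num [hF0, Nat.factorial] at e₀ e₁ e₂ e₃
  refine ⟨by linear_combination e₀, by linear_combination e₁, by linear_combination e₂ / 2,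
    by linear_combination e₃ / 6⟩

end HermiteCoeffGen

/-- Finite Hermite expansion of Laguerre polynomials, with
`A = x-α-1`, `B = x-(α+1)/2`, `z = √B ≠ 0`, `ξ = (x-α-1)/(2z)`:
`Lₙ^α(x) = (-1)ⁿ zⁿ Σ_{k=0}^n (cₖ/zᵏ) H_{n-k}(ξ)/(n-k)!`, and
`c₀ = 1`, `c₁ = c₂ = 0`, `c₃ = (3x-α-1)/3`. -/
theorem stmt_8 (α x : ℂ) (L : ℕ → ℂ)
    (hL : ∀ᶠ w in 𝓝 (0:ℂ), HasSum (fun m => (-1) ^ m * L m * w ^ m)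
      ((1 + w) ^ (-α - 1) * Complex.exp (w * x / (1 + w))))
    (z : ℂ) (hz0 : z ≠ 0) (hz : z ^ 2 = x - (α + 1) / 2)
    (c : ℕ → ℂ)
    (hc : ∀ᶠ w in 𝓝 (0:ℂ), HasSum (fun k => c k * w ^ k)
      (Complex.exp (-(x - α - 1) * w + (x - (α + 1) / 2) * w ^ 2) *
        ((1 + w) ^ (-α - 1) * Complex.exp (w * x / (1 + w)))))
    (H : ℕ → ℂ → ℂ)
    (hH : ∀ y w : ℂ, HasSum (fun m => H m y / (Nat.factorial m : ℂ) * w ^ m)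
      (Complex.exp (2 * y * w - w ^ 2))) :
    (∀ n, L n = (-1) ^ n * z ^ n * ∑ k ∈ Finset.range (n + 1),
      c k / z ^ k * H (n - k) ((x - α - 1) / (2 * z)) / (Nat.factorial (n - k) : ℂ)) ∧
    c 0 = 1 ∧ c 1 = 0 ∧ c 2 = 0 ∧ c 3 = (3 * x - α - 1) / 3 := by
  set ξ := (x - α - 1) / (2 * z)
  have hermite (w : ℂ) : HasSum (fun m => H m ξ / (m.factorial : ℂ) * z ^ m * w ^ m)
      (Complex.exp ((x - α - 1) * w - (x - (α + 1) / 2) * w ^ 2)) := by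
    have hξ : 2 * ξ * z = x - α - 1 := by simp only [ξ]; field_simp
    have h := hH ξ (z * w)
    rw [show 2 * ξ * (z * w) - (z * w) ^ 2 = (x - α - 1) * w - (x - (α + 1) / 2) * w ^ 2 by
      linear_combination w * hξ - w ^ 2 * hz] at h
    simpa only [mul_pow, mul_assoc] using h
  have laguerre : ∀ᶠ w in 𝓝 (0:ℂ), HasSum (fun n =>
      (∑ k ∈ Finset.range (n + 1), c k * (H (n - k) ξ / ((n - k).factorial : ℂ) * z ^ (n - k)))
        * w ^ n) ((1 + w) ^ (-α - 1) * Complex.exp (w * x / (1 + w))) := by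
    filter_upwards [eventually_hasSum_cauchyProduct hc (.of_forall hermite)] with w hw
    rwa [mul_right_comm, ← Complex.exp_add, show -(x - α - 1) * w + (x - (α + 1) / 2) * w ^ 2 +
      ((x - α - 1) * w - (x - (α + 1) / 2) * w ^ 2) = 0 by ring, Complex.exp_zero, one_mul] at hw
  refine ⟨fun n => ?_, coeff_of_hasSum_hermiteCoeffGen α x hc⟩
  have e := congrFun (coeff_eq_of_eventually_hasSum hL laguerre) n
  calc L n = (-1) ^ n * ((-1) ^ n * L n) := by rw [← mul_assoc, ← mul_pow]; norm_num
    _ = _ := by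
      rw [e, mul_assoc, Finset.mul_sum (s := Finset.range (n + 1)) (a := z ^ n)]
      congr 1
      refine Finset.sum_congr rfl fun k hk => ?_
      rw [← pow_mul_pow_sub z (Nat.le_of_lt_succ (Finset.mem_range.mp hk))]
      field_simp
end

section
/- For the Krawtchouk polynomials Kₙ(x;p,N) with 0 < p < 1, q = (1−p)/p, and generating function (1−qw)^x(1+w)^{N−x} = Σ_{n=0}^N binom(N,n) Kₙ(x;p,N) wⁿ, take B = 1, C = α, A = α+1−N+(1+q)x. Then the coefficients cₖ of e^{−Aw/(w−1)}(1−w)^{α+1}F(x,w) satisfy c₀ = 1, c₁ = 0, and c₂ = ½[1 + α − 3N + (3 + 2q − q²)x]. -/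
open Filter Topology Complex

/-!
The coefficients `c₀, c₁, c₂` are `G(0)`, `G'(0)` and `G''(0)/2` for the summed function `G`.
Being a product of an exponential and complex powers, `G` satisfies `G' = G · L` with an
explicit rational logarithmic derivative `L`, so
`G'(0) = G(0) L(0)` and `G''(0) = G(0) (L(0)² + L'(0))`. Here `G(0) = 1`, and the choice of `A`
is exactly what makes `L(0) = 0`.
-/

theorem coeff_eq_iteratedDeriv_div_factorial {𝕜 : Type*} [NontriviallyNormedField 𝕜]
    [CompleteSpace 𝕜] [CharZero 𝕜] {c : ℕ → 𝕜} {f : 𝕜 → 𝕜}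
    (hc : ∀ᶠ w in 𝓝 0, HasSum (fun k => c k * w ^ k) (f w)) (n : ℕ) :
    c n = iteratedDeriv n f 0 / n.factorial := by
  have hp : HasFPowerSeriesAt f (FormalMultilinearSeries.ofScalars 𝕜 c) 0 := by
    rw [hasFPowerSeriesAt_iff]
    filter_upwards [hc] with w hw
    simpa [mul_comm] using hw
  have h := hp.eq_formalMultilinearSeries hp.analyticAt.hasFPowerSeriesAt
  simpa using congrArg (fun p => FormalMultilinearSeries.coeff p n) h

theorem iteratedDeriv_two_of_hasDerivAt_mul {𝕜 : Type*} [NontriviallyNormedField 𝕜]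
    {f L : 𝕜 → 𝕜} {z L' : 𝕜} (hf : ∀ᶠ w in 𝓝 z, HasDerivAt f (f w * L w) w)
    (hL : HasDerivAt L L' z) :
    iteratedDeriv 2 f z = f z * (L z ^ 2 + L') := by
  have hderiv : deriv f =ᶠ[𝓝 z] fun w => f w * L w := hf.mono fun w hw => hw.deriv
  rw [iteratedDeriv_succ, iteratedDeriv_one, hderiv.deriv_eq,
    (hf.self_of_nhds.fun_mul hL).deriv]
  ring

theorem eventually_mem_slitPlane {f : ℂ → ℂ} {z : ℂ} (hf : ContinuousAt f z)
    (hz : f z ∈ slitPlane) : ∀ᶠ w in 𝓝 z, f w ∈ slitPlane :=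
  hf.eventually_mem (isOpen_slitPlane.mem_nhds hz)

theorem HasDerivAt.cpow_const_logDeriv {f : ℂ → ℂ} {f' w : ℂ} (c : ℂ) (hf : HasDerivAt f f' w)
    (hw : f w ∈ slitPlane) :
    HasDerivAt (fun w => f w ^ c) (f w ^ c * (c * f' / f w)) w := by
  refine (hf.cpow_const hw).congr_deriv ?_
  rw [cpow_sub _ _ (slitPlane_ne_zero hw), cpow_one]
  ring

noncomputable section KrawtchoukLaguerre

variable (q x N α A : ℂ)

def krawtchoukLaguerreKernel (w : ℂ) : ℂ :=
  exp (-A * w / (w - 1)) * (1 - w) ^ (α + 1) * ((1 - q * w) ^ x * (1 + w) ^ (N - x))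

def krawtchoukLaguerreLogDeriv (w : ℂ) : ℂ :=
  A / (w - 1) ^ 2 - (α + 1) / (1 - w) - q * x / (1 - q * w) + (N - x) / (1 + w)

theorem hasDerivAt_krawtchoukLaguerreKernel {w : ℂ} (h₁ : 1 - w ∈ slitPlane)
    (h₂ : 1 - q * w ∈ slitPlane) (h₃ : 1 + w ∈ slitPlane) :
    HasDerivAt (krawtchoukLaguerreKernel q x N α A)
      (krawtchoukLaguerreKernel q x N α A w * krawtchoukLaguerreLogDeriv q x N α A w) w := by
  have hw : w - 1 ≠ 0 := by
    rw [← neg_ne_zero, neg_sub]; exact slitPlane_ne_zero h₁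
  have hexp : HasDerivAt (fun w => exp (-A * w / (w - 1)))
      (exp (-A * w / (w - 1)) * (A / (w - 1) ^ 2)) w := by
    have hu := ((hasDerivAt_id w).const_mul (-A)).fun_div ((hasDerivAt_id w).sub_const 1) hw
    refine hu.cexp.congr_deriv ?_
    simp only [id]
    ring
  have h1 := ((hasDerivAt_id w).const_sub 1).cpow_const_logDeriv (α + 1) h₁
  have h2 := (((hasDerivAt_id w).const_mul q).const_sub 1).cpow_const_logDeriv x h₂
  have h3 := ((hasDerivAt_id w).const_add 1).cpow_const_logDeriv (N - x) h₃
  refine ((hexp.mul h1).mul (h2.mul h3)).congr_deriv ?_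
  simp only [krawtchoukLaguerreKernel, krawtchoukLaguerreLogDeriv, Pi.mul_apply, id]
  ring

theorem hasDerivAt_krawtchoukLaguerreLogDeriv_zero :
    HasDerivAt (krawtchoukLaguerreLogDeriv q x N α A)
      (2 * A - (α + 1) - q ^ 2 * x - (N - x)) 0 := by
  have h₁ := (hasDerivAt_const (0 : ℂ) A).div (((hasDerivAt_id (0 : ℂ)).sub_const 1).pow 2)
    (by norm_num)
  have h₂ := (hasDerivAt_const (0 : ℂ) (α + 1)).div ((hasDerivAt_id (0 : ℂ)).const_sub 1)
    (by norm_num)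
  have h₃ := (hasDerivAt_const (0 : ℂ) (q * x)).div
    (((hasDerivAt_id (0 : ℂ)).const_mul q).const_sub 1) (by norm_num)
  have h₄ := (hasDerivAt_const (0 : ℂ) (N - x)).div ((hasDerivAt_id (0 : ℂ)).const_add 1)
    (by norm_num)
  refine (((h₁.sub h₂).sub h₃).add h₄).congr_deriv ?_
  norm_num
  ring

end KrawtchoukLaguerre

theorem stmt_19_general (q : ℝ)
    (x N α : ℂ) (A : ℂ) (hA : A = α + 1 - N + (1 + (q : ℂ)) * x)
    (c : ℕ → ℂ)
    (hc : ∀ᶠ w in 𝓝 (0:ℂ), HasSum (fun k => c k * w ^ k)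
      (Complex.exp (-A * w / (w - 1)) * (1 - w) ^ (α + 1) *
        ((1 - (q : ℂ) * w) ^ x * (1 + w) ^ (N - x)))) :
    c 0 = 1 ∧ c 1 = 0 ∧
    c 2 = (1 + α - 3 * N + (3 + 2 * (q : ℂ) - (q : ℂ) ^ 2) * x) / 2 := by
  set G := krawtchoukLaguerreKernel q x N α A
  set L := krawtchoukLaguerreLogDeriv q x N α A
  have hcoeff := coeff_eq_iteratedDeriv_div_factorial (f := G) hc
  have hG : ∀ᶠ w in 𝓝 0, HasDerivAt G (G w * L w) w := by
    filter_upwards [eventually_mem_slitPlane (f := fun w => 1 - w) (by fun_prop) (by simp),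
      eventually_mem_slitPlane (f := fun w => 1 - q * w) (by fun_prop) (by simp),
      eventually_mem_slitPlane (f := fun w => 1 + w) (by fun_prop) (by simp)] with w h₁ h₂ h₃
    exact hasDerivAt_krawtchoukLaguerreKernel q x N α A h₁ h₂ h₃
  have hG0 : G 0 = 1 := by simp [G, krawtchoukLaguerreKernel]
  have hL0 : L 0 = 0 := by simp only [L, krawtchoukLaguerreLogDeriv, hA]; ring
  refine ⟨?_, ?_, ?_⟩
  · simpa [hG0] using hcoeff 0
  · simpa [hG.self_of_nhds.deriv, hG0, hL0] using hcoeff 1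
  · rw [hcoeff 2, iteratedDeriv_two_of_hasDerivAt_mul hG
      (hasDerivAt_krawtchoukLaguerreLogDeriv_zero q x N α A), hG0, hL0, hA]
    norm_num
    ring

/-- Krawtchouk into Laguerre: with `0 < p < 1`, `q = (1−p)/p`, `B = 1`,
`C = α`, `A = α + 1 − N + (1+q)x`, the coefficients of
`e^{-Aw/(w-1)}(1-w)^{α+1}(1-qw)^x(1+w)^{N-x}` satisfy `c₀ = 1`, `c₁ = 0`,
`c₂ = ½[1 + α − 3N + (3 + 2q − q²)x]`. -/
theorem stmt_19 (p : ℝ) (hp0 : 0 < p) (hp1 : p < 1) (q : ℝ) (hq : q = (1 - p) / p)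
    (x N α : ℂ) (A : ℂ) (hA : A = α + 1 - N + (1 + (q : ℂ)) * x)
    (c : ℕ → ℂ)
    (hc : ∀ᶠ w in 𝓝 (0:ℂ), HasSum (fun k => c k * w ^ k)
      (Complex.exp (-A * w / (w - 1)) * (1 - w) ^ (α + 1) *
        ((1 - (q : ℂ) * w) ^ x * (1 + w) ^ (N - x)))) :
    c 0 = 1 ∧ c 1 = 0 ∧
    c 2 = (1 + α - 3 * N + (3 + 2 * (q : ℂ) - (q : ℂ) ^ 2) * x) / 2 :=
  stmt_19_general q x N α A hA c hc
end
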